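/- Let R = ℂ[α₂, α₃, β₂] with grading deg α₂ = 2, deg α₃ = 4, deg β₂ = 4, equipped with the graded reverse lexicographic order. Suppose an ideal I ⊆ R has leading term ideal containing {α₂^i α₃^j β₂^k : k ≤ 2, 2i + 3j + 2k ≥ 4g − 2} ∪ {β₂³}. Then dim_ℂ R/I ≤ (2g−1)². -/

import Mathlib

/-- The weighted degree of a monomial exponent in `ℂ[α₂, α₃, β₂]`, where
`deg α₂ = 2`, `deg α₃ = 4`, `deg β₂ = 4`. -/
def wdeg (m : Fin 3 →₀ ℕ) : ℕ := 2 * m 0 + 4 * m 1 + 4 * m 2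

/-- The graded reverse lexicographic order (with the above weights) on monomial
exponents: `a < b` iff `wdeg a < wdeg b`, or the weighted degrees agree and the
right-most entry where they differ is larger in `a`. -/
def grevlexLT (a b : Fin 3 →₀ ℕ) : Prop :=
  wdeg a < wdeg b ∨
    (wdeg a = wdeg b ∧ (b 2 < a 2 ∨ (a 2 = b 2 ∧ (b 1 < a 1 ∨ (a 1 = b 1 ∧ b 0 < a 0)))))

/-- `m` is the leading monomial of `p`: it occurs in `p` and dominates every other
monomial of `p` in the graded reverse lexicographic order. -/
def IsLeadingMonomial (p : MvPolynomial (Fin 3) ℂ) (m : Fin 3 →₀ ℕ) : Prop :=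
  m ∈ p.support ∧ ∀ m' ∈ p.support, m' ≠ m → grevlexLT m' m

/-- The leading term ideal of an ideal `I ⊆ ℂ[α₂, α₃, β₂]`: the ideal generated by the
leading monomials of the elements of `I`. -/
noncomputable def leadingTermIdeal (I : Ideal (MvPolynomial (Fin 3) ℂ)) :
    Ideal (MvPolynomial (Fin 3) ℂ) :=
  Ideal.span {q | ∃ p ∈ I, ∃ m, IsLeadingMonomial p m ∧ q = MvPolynomial.monomial m 1}

/-!
The residue classes of the standard monomials, those outside the leading term ideal, span
`R/I`: a monomial `m` in the leading term ideal is divisible by the leading monomial of some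
`p ∈ I`, and subtracting the matching multiple of `p` rewrites `m` modulo `I` as a combination
of grevlex-smaller monomials, so well-founded induction applies.  The hypotheses leave as
standard only exponents `(i, j, k)` with `k ≤ 2` and `2i + 3j + 2k < 4g - 2`, and
`(i, j, k) ↦ (3⌊j/2⌋ + k, 2i + (j mod 2))` embeds these into the triangle
`{(b, a) : b < 2g - 1, a + 2b ≤ 4g - 4}`, whose size is the sum of the first `2g - 1` odd
numbers.
-/

open MvPolynomial

lemma grevlexLT_add_left {a b : Fin 3 →₀ ℕ} (c : Fin 3 →₀ ℕ) (h : grevlexLT a b) :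
    grevlexLT (c + a) (c + b) := by
  simp only [grevlexLT, wdeg, Finsupp.add_apply] at h ⊢
  omega

lemma wellFounded_grevlexLT : WellFounded grevlexLT := by
  let key (m : Fin 3 →₀ ℕ) : ℕ ×ₗ ℕ ×ₗ ℕ := toLex (wdeg m, toLex (wdeg m - m 2, wdeg m - m 1))
  refine Subrelation.wf (fun {a b} h => ?_) (InvImage.wf key wellFounded_lt)
  simp only [InvImage, key, Prod.Lex.lt_iff, ofLex_toLex]
  simp only [grevlexLT, wdeg] at h ⊢
  omega

lemma exists_isLeadingMonomial_le_of_monomial_mem {I : Ideal (MvPolynomial (Fin 3) ℂ)}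
    {m : Fin 3 →₀ ℕ} (hm : monomial m (1 : ℂ) ∈ leadingTermIdeal I) :
    ∃ p ∈ I, ∃ m₀, IsLeadingMonomial p m₀ ∧ m₀ ≤ m := by
  have hgen : {q | ∃ p ∈ I, ∃ m, IsLeadingMonomial p m ∧ q = monomial m (1 : ℂ)} =
      (monomial · 1) '' {m | ∃ p ∈ I, IsLeadingMonomial p m} := by
    ext q
    constructor
    · rintro ⟨p, hp, m, hlm, rfl⟩
      exact ⟨m, ⟨p, hp, hlm⟩, rfl⟩
    · rintro ⟨m, ⟨p, hp, hlm⟩, rfl⟩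
      exact ⟨p, hp, m, hlm, rfl⟩
  rw [leadingTermIdeal, hgen, mem_ideal_span_monomial_image] at hm
  obtain ⟨m₀, ⟨p, hp, hlm⟩, hle⟩ := hm m (by simp [support_monomial])
  exact ⟨p, hp, m₀, hlm, hle⟩

lemma support_monomial_sub_monomial_mul_subset {p : MvPolynomial (Fin 3) ℂ} {m₀ m : Fin 3 →₀ ℕ}
    (hp : IsLeadingMonomial p m₀) (hle : m₀ ≤ m) :
    ↑(monomial m 1 - monomial (m - m₀) (coeff m₀ p)⁻¹ * p).support ⊆ {m' | grevlexLT m' m} := by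
  intro m' hm'
  have hc : coeff m₀ p ≠ 0 := mem_support_iff.mp hp.1
  rw [Finset.mem_coe, mem_support_iff, coeff_sub, coeff_monomial_mul'] at hm'
  by_cases hm'm : m' = m
  · subst hm'm
    simp [tsub_tsub_cancel_of_le hle, hc] at hm'
  · have hd : m - m₀ ≤ m' := by by_contra h; simp [h, coeff_monomial, Ne.symm hm'm] at hm'
    have ht : m' - (m - m₀) ∈ p.support := by
      simp only [coeff_monomial, Ne.symm hm'm, if_false, hd, if_true, zero_sub, neg_ne_zero,
        mul_ne_zero_iff] at hm'
      exact mem_support_iff.mpr hm'.2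
    have hm : m - m₀ + (m' - (m - m₀)) = m' := add_tsub_cancel_of_le hd
    have htm : m' - (m - m₀) ≠ m₀ := fun h => hm'm (by rw [← hm, h, tsub_add_cancel_of_le hle])
    have := grevlexLT_add_left (m - m₀) (hp.2 _ ht htm)
    rwa [hm, tsub_add_cancel_of_le hle] at this

lemma mkₐ_mem_span_monomial_of_support_subset {σ R : Type*} [CommRing R]
    (I : Ideal (MvPolynomial σ R)) {s : Set (σ →₀ ℕ)} {p : MvPolynomial σ R}
    (hp : ↑p.support ⊆ s) :
    Ideal.Quotient.mkₐ R I p ∈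
      Submodule.span R ((fun m => Ideal.Quotient.mkₐ R I (monomial m 1)) '' s) := by
  rw [← Set.image_image (Ideal.Quotient.mkₐ R I) (monomial · 1),
    ← (Ideal.Quotient.mkₐ R I).coe_toLinearMap, Submodule.span_image, ← restrictSupport_eq_span]
  exact Submodule.mem_map_of_mem hp

lemma mkₐ_monomial_mem_span_lt {I : Ideal (MvPolynomial (Fin 3) ℂ)} {m : Fin 3 →₀ ℕ}
    (hm : monomial m (1 : ℂ) ∈ leadingTermIdeal I) :
    Ideal.Quotient.mkₐ ℂ I (monomial m 1) ∈ Submodule.span ℂ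
      ((fun m' => Ideal.Quotient.mkₐ ℂ I (monomial m' 1)) '' {m' | grevlexLT m' m}) := by
  obtain ⟨p, hpI, m₀, hlm, hle⟩ := exists_isLeadingMonomial_le_of_monomial_mem hm
  have hmul : monomial (m - m₀) (coeff m₀ p)⁻¹ * p ∈ I := I.mul_mem_left _ hpI
  have hmk : Ideal.Quotient.mkₐ ℂ I (monomial m 1) =
      Ideal.Quotient.mkₐ ℂ I (monomial m 1 - monomial (m - m₀) (coeff m₀ p)⁻¹ * p) := by
    rw [map_sub, Ideal.Quotient.mkₐ_eq_mk, Ideal.Quotient.eq_zero_iff_mem.mpr hmul, sub_zero]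
  rw [hmk]
  exact mkₐ_mem_span_monomial_of_support_subset I
    (support_monomial_sub_monomial_mul_subset hlm hle)

lemma span_mkₐ_monomial_eq_top {I : Ideal (MvPolynomial (Fin 3) ℂ)} {S : Set (Fin 3 →₀ ℕ)}
    (hS : ∀ m ∉ S, monomial m (1 : ℂ) ∈ leadingTermIdeal I) :
    Submodule.span ℂ ((fun m => Ideal.Quotient.mkₐ ℂ I (monomial m 1)) '' S) = ⊤ := by
  set V := Submodule.span ℂ ((fun m => Ideal.Quotient.mkₐ ℂ I (monomial m 1)) '' S)
  have hmonomial (m : Fin 3 →₀ ℕ) : Ideal.Quotient.mkₐ ℂ I (monomial m 1) ∈ V := by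
    induction m using wellFounded_grevlexLT.induction with
    | _ m ih =>
      by_cases hmS : m ∈ S
      · exact Submodule.subset_span ⟨m, hmS, rfl⟩
      · refine Submodule.span_le.mpr ?_ (mkₐ_monomial_mem_span_lt (hS m hmS))
        rintro _ ⟨m', hm', rfl⟩
        exact ih m' hm'
  refine Submodule.eq_top_iff'.mpr fun x => ?_
  obtain ⟨p, rfl⟩ := Ideal.Quotient.mkₐ_surjective ℂ I x
  refine Submodule.span_le.mpr ?_ (mkₐ_mem_span_monomial_of_support_subset I (Set.subset_univ _))
  rintro _ ⟨m, -, rfl⟩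
  exact hmonomial m

lemma rank_quotient_le_mk {I : Ideal (MvPolynomial (Fin 3) ℂ)} {S : Set (Fin 3 →₀ ℕ)}
    (hS : ∀ m ∉ S, monomial m (1 : ℂ) ∈ leadingTermIdeal I) :
    Module.rank ℂ (MvPolynomial (Fin 3) ℂ ⧸ I) ≤ Cardinal.mk S := by
  calc Module.rank ℂ (MvPolynomial (Fin 3) ℂ ⧸ I)
      = Module.rank ℂ (Submodule.span ℂ
          ((fun m => Ideal.Quotient.mkₐ ℂ I (monomial m 1)) '' S)) := by
        rw [span_mkₐ_monomial_eq_top hS, rank_top]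
    _ ≤ Cardinal.mk ((fun m => Ideal.Quotient.mkₐ ℂ I (monomial m 1)) '' S) := rank_span_le _
    _ ≤ Cardinal.mk S := Cardinal.mk_image_le

def standardExponents (g : ℕ) : Set (Fin 3 →₀ ℕ) :=
  {m | m 2 ≤ 2 ∧ 2 * m 0 + 3 * m 1 + 2 * m 2 < 4 * g - 2}

lemma single_zero_add_single_one_add_single_two (m : Fin 3 →₀ ℕ) :
    Finsupp.single 0 (m 0) + Finsupp.single 1 (m 1) + Finsupp.single 2 (m 2) = m := by
  ext i
  fin_cases i <;> simp

lemma sum_range_two_mul_add_one (n : ℕ) : ∑ i ∈ Finset.range n, (2 * i + 1) = n ^ 2 := by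
  induction n with
  | zero => simp
  | succ n ih => rw [Finset.sum_range_succ, ih]; ring

lemma mk_standardExponents_le (g : ℕ) :
    Cardinal.mk (standardExponents g) ≤ ((2 * g - 1) ^ 2 : ℕ) := by
  let triangle : Finset ((_ : ℕ) × ℕ) :=
    (Finset.range (2 * g - 1)).sigma fun b => Finset.range (2 * (2 * g - 1 - 1 - b) + 1)
  let encode (m : Fin 3 →₀ ℕ) : (_ : ℕ) × ℕ := ⟨3 * (m 1 / 2) + m 2, 2 * m 0 + m 1 % 2⟩
  have hmaps : Set.MapsTo encode (standardExponents g) triangle := by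
    rintro m ⟨hk, hdeg⟩
    simp only [triangle, encode, Finset.coe_sigma, Set.mem_sigma_iff, Finset.coe_range,
      Set.mem_Iio]
    omega
  have hinj : Set.InjOn encode (standardExponents g) := by
    rintro m ⟨hk, -⟩ m' ⟨hk', -⟩ h
    simp only [encode, Sigma.mk.injEq, heq_eq_eq] at h
    ext i
    fin_cases i <;> simp <;> omega
  have hcard : triangle.card = (2 * g - 1) ^ 2 := by
    rw [Finset.card_sigma]
    simp only [Finset.card_range]
    rw [Finset.sum_range_reflect (fun b => 2 * b + 1), sum_range_two_mul_add_one]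
  calc Cardinal.mk (standardExponents g)
      = Cardinal.mk (encode '' standardExponents g) :=
        (Cardinal.mk_image_eq_of_injOn _ _ hinj).symm
    _ ≤ Cardinal.mk (triangle : Set ((_ : ℕ) × ℕ)) :=
        Cardinal.mk_le_mk_of_subset hmaps.image_subset
    _ = ((2 * g - 1) ^ 2 : ℕ) := by rw [Finset.coe_sort_coe, Cardinal.mk_coe_finset, hcard]

lemma monomial_mem_leadingTermIdeal_of_not_mem_standardExponents {g : ℕ}
    {I : Ideal (MvPolynomial (Fin 3) ℂ)}
    (h1 : ∀ i j k : ℕ, k ≤ 2 → 4 * g - 2 ≤ 2 * i + 3 * j + 2 * k →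
      monomial (Finsupp.single 0 i + Finsupp.single 1 j + Finsupp.single 2 k) (1 : ℂ)
        ∈ leadingTermIdeal I)
    (h2 : monomial (Finsupp.single 2 3) (1 : ℂ) ∈ leadingTermIdeal I)
    {m : Fin 3 →₀ ℕ} (hm : m ∉ standardExponents g) :
    monomial m (1 : ℂ) ∈ leadingTermIdeal I := by
  by_cases hk : m 2 ≤ 2
  · have hdeg : 4 * g - 2 ≤ 2 * m 0 + 3 * m 1 + 2 * m 2 := by
      simpa [standardExponents, hk] using hm
    simpa only [single_zero_add_single_one_add_single_two] using h1 _ _ _ hk hdeg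
  · have h3 : Finsupp.single 2 3 ≤ m := Finsupp.single_le_iff.mpr (by omega)
    rw [← tsub_add_cancel_of_le h3, ← mul_one (1 : ℂ), ← monomial_mul]
    exact (leadingTermIdeal I).mul_mem_left _ h2

theorem simple_type_quotient_bound_general (g : ℕ)
    (I : Ideal (MvPolynomial (Fin 3) ℂ))
    (h1 : ∀ i j k : ℕ, k ≤ 2 → 4 * g - 2 ≤ 2 * i + 3 * j + 2 * k →
      MvPolynomial.monomial
          (Finsupp.single 0 i + Finsupp.single 1 j + Finsupp.single 2 k) (1 : ℂ)
        ∈ leadingTermIdeal I)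
    (h2 : MvPolynomial.monomial (Finsupp.single 2 3) (1 : ℂ) ∈ leadingTermIdeal I) :
    Module.rank ℂ (MvPolynomial (Fin 3) ℂ ⧸ I) ≤ ((2 * g - 1) ^ 2 : ℕ) :=
  (rank_quotient_le_mk fun _ hm =>
    monomial_mem_leadingTermIdeal_of_not_mem_standardExponents h1 h2 hm).trans
    (mk_standardExponents_le g)

/-- Let `R = ℂ[α₂, α₃, β₂]` with the graded reverse lexicographic order for the weights
`(2,4,4)`.  If the leading term ideal of an ideal `I ⊆ R` contains all monomials
`α₂^i α₃^j β₂^k` with `k ≤ 2` and `2i + 3j + 2k ≥ 4g − 2`, together with `β₂³`, then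
`dim_ℂ R/I ≤ (2g−1)²`. -/
theorem simple_type_quotient_bound (g : ℕ) (hg : 1 ≤ g)
    (I : Ideal (MvPolynomial (Fin 3) ℂ))
    (h1 : ∀ i j k : ℕ, k ≤ 2 → 4 * g - 2 ≤ 2 * i + 3 * j + 2 * k →
      MvPolynomial.monomial
          (Finsupp.single 0 i + Finsupp.single 1 j + Finsupp.single 2 k) (1 : ℂ)
        ∈ leadingTermIdeal I)
    (h2 : MvPolynomial.monomial (Finsupp.single 2 3) (1 : ℂ) ∈ leadingTermIdeal I) :
    Module.rank ℂ (MvPolynomial (Fin 3) ℂ ⧸ I) ≤ ((2 * g - 1) ^ 2 : ℕ) :=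
  simple_type_quotient_bound_general g I h1 h2
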